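/- arXiv:1906.01614 — 2 statements merged into one kernel-verified Lean document; each statement's English description precedes it below -/
import Mathlib

section
/- Let q ∈ (1,2]. Then for any Δ, Δ* ∈ ℝ^d, writing ξ = Δ − Δ*, one has ‖Δ‖_q² ≥ ‖Δ*‖_q² + D_q(Δ*)'ξ + (q−1)‖ξ‖_q², where D_q(Δ*) is the gradient of the map Δ ↦ ‖Δ‖_q² at Δ*. -/
open scoped RealInnerProductSpace
open Real Set Filter Topology

/-!
Ball–Carlen–Lieb. For `1 ≤ q ≤ 2` the two-point inequality
`2 (a² + (q-1) b²)^(q/2) ≤ |a+b|^q + |a-b|^q` (Bernoulli on the left, a second-order Taylor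
bound on the right) is summed over the coordinates of `u = (x+y)/2`, `v = (x-y)/2`. The reverse
Minkowski inequality in `ℓ^(q/2)` and the convexity of `s ↦ s^(2/q)` then give the midpoint
inequality `‖u‖_q² + (q-1) ‖v‖_q² ≤ (‖x‖_q² + ‖y‖_q²) / 2`.

Along the line `t ↦ Δ* + t ξ` this says that `f t = ‖Δ* + t ξ‖_q² - (q-1) ‖ξ‖_q² t²` is midpoint
convex at `0`, so its difference quotients over `[0, 2⁻ⁿ]` decrease in `n`. Their limit
`f' 0 = D_q(Δ*)'ξ` is therefore at most the first one, `f 1 - f 0`.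
-/

lemma two_le_one_add_rpow_add_one_sub_rpow {p t : ℝ} (hp : p ≤ 0) (ht : |t| < 1) :
    2 ≤ (1 + t) ^ p + (1 - t) ^ p := by
  obtain ⟨ht₁, ht₂⟩ := abs_lt.mp ht
  have hprod : 1 ≤ (1 + t) ^ p * (1 - t) ^ p := by
    rw [← mul_rpow (by linarith) (by linarith)]
    exact one_le_rpow_of_pos_of_le_one_of_nonpos (by nlinarith) (by nlinarith [sq_nonneg t]) hp
  nlinarith [sq_nonneg ((1 + t) ^ p - (1 - t) ^ p), rpow_pos_of_pos (by linarith : 0 < 1 + t) p,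
    rpow_pos_of_pos (by linarith : 0 < 1 - t) p]

lemma hasDerivAt_one_add_rpow (p : ℝ) {x : ℝ} (hx : 1 + x ≠ 0) :
    HasDerivAt (fun y => (1 + y) ^ p) (p * (1 + x) ^ (p - 1)) x := by
  simpa using ((hasDerivAt_id x).const_add 1).rpow_const (p := p) (Or.inl hx)

lemma hasDerivAt_one_sub_rpow (p : ℝ) {x : ℝ} (hx : 1 - x ≠ 0) :
    HasDerivAt (fun y => (1 - y) ^ p) (-(p * (1 - x) ^ (p - 1))) x := by
  simpa using ((hasDerivAt_id x).const_sub 1).rpow_const (p := p) (Or.inl hx)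

lemma nonneg_of_hasDerivAt_nonneg {f f' : ℝ → ℝ} (hf : ContinuousOn f (Icc 0 1))
    (hf' : ∀ x ∈ Ioo (0 : ℝ) 1, HasDerivAt f (f' x) x)
    (hf'₀ : ∀ x ∈ Ioo (0 : ℝ) 1, 0 ≤ f' x)
    (h₀ : f 0 = 0) {t : ℝ} (ht : t ∈ Icc (0 : ℝ) 1) : 0 ≤ f t := by
  have hmono : MonotoneOn f (Icc 0 1) := by
    refine monotoneOn_of_hasDerivWithinAt_nonneg (f' := f') (convex_Icc 0 1) hf ?_ ?_ <;>
      rw [interior_Icc]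
    exacts [fun x hx => (hf' x hx).hasDerivWithinAt, hf'₀]
  simpa [h₀] using hmono (left_mem_Icc.mpr zero_le_one) ht ht.1

lemma two_mul_mul_le_one_add_rpow_sub_one_sub_rpow {p t : ℝ} (hp₀ : 0 ≤ p) (hp₁ : p ≤ 1)
    (ht : t ∈ Icc (0 : ℝ) 1) : 2 * p * t ≤ (1 + t) ^ p - (1 - t) ^ p := by
  have h := nonneg_of_hasDerivAt_nonneg (f := fun x => (1 + x) ^ p - (1 - x) ^ p - 2 * p * x)
    (by fun_prop (disch := exact hp₀))
    (fun x hx => ((hasDerivAt_one_add_rpow p (by linarith [hx.1])).sub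
      (hasDerivAt_one_sub_rpow p (by linarith [hx.2]))).sub
      ((hasDerivAt_id x).const_mul (2 * p)))
    (fun x hx => by
      have := two_le_one_add_rpow_add_one_sub_rpow (p := p - 1) (by linarith)
        (abs_lt.mpr ⟨by linarith [hx.1], hx.2⟩)
      simp only [mul_one]
      nlinarith)
    (by simp) ht
  linarith

lemma two_add_mul_sq_le_one_add_rpow_add_one_sub_rpow {q t : ℝ} (hq₁ : 1 ≤ q)
    (hq₂ : q ≤ 2) (ht : t ∈ Icc (0 : ℝ) 1) :
    2 + q * (q - 1) * t ^ 2 ≤ (1 + t) ^ q + (1 - t) ^ q := by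
  have h := nonneg_of_hasDerivAt_nonneg
    (f := fun x => (1 + x) ^ q + (1 - x) ^ q - 2 - q * (q - 1) * x ^ 2)
    (by fun_prop (disch := linarith))
    (fun x hx => ((((hasDerivAt_one_add_rpow q (by linarith [hx.1])).add
      (hasDerivAt_one_sub_rpow q (by linarith [hx.2]))).sub_const 2).sub
      ((hasDerivAt_pow 2 x).const_mul (q * (q - 1)))))
    (fun x hx => by
      have := two_mul_mul_le_one_add_rpow_sub_one_sub_rpow (p := q - 1) (by linarith)
        (by linarith) (Ioo_subset_Icc_self hx)
      norm_num
      nlinarith)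
    (by norm_num) ht
  linarith

lemma two_mul_sq_add_rpow_le_add_rpow_add_sub_rpow {q a b : ℝ} (hq₁ : 1 ≤ q) (hq₂ : q ≤ 2)
    (hb : 0 ≤ b) (hba : b ≤ a) :
    2 * (a ^ 2 + (q - 1) * b ^ 2) ^ (q / 2) ≤ (a + b) ^ q + (a - b) ^ q := by
  rcases (hb.trans hba).eq_or_lt with rfl | ha
  · obtain rfl : b = 0 := le_antisymm hba hb
    simp [zero_rpow (by linarith : q / 2 ≠ 0), zero_rpow (by linarith : q ≠ 0)]
  obtain ⟨t, ht, rfl⟩ : ∃ t ∈ Icc (0 : ℝ) 1, b = a * t :=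
    ⟨b / a, ⟨div_nonneg hb ha.le, div_le_one_of_le₀ hba ha.le⟩, by field_simp⟩
  have hbern : (1 + (q - 1) * t ^ 2) ^ (q / 2) ≤ 1 + q / 2 * ((q - 1) * t ^ 2) :=
    rpow_one_add_le_one_add_mul_self (by nlinarith) (by linarith) (by linarith)
  have htaylor := two_add_mul_sq_le_one_add_rpow_add_one_sub_rpow hq₁ hq₂ ht
  have e₁ : (a ^ 2 + (q - 1) * (a * t) ^ 2) ^ (q / 2)
      = a ^ q * (1 + (q - 1) * t ^ 2) ^ (q / 2) := by
    have : a ^ q = (a ^ 2) ^ (q / 2) := by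
      rw [← rpow_natCast_mul ha.le]; push_cast; ring_nf
    rw [this, ← mul_rpow (by positivity) (by nlinarith)]
    ring_nf
  have e₂ : (a + a * t) ^ q = a ^ q * (1 + t) ^ q := by
    rw [← mul_rpow ha.le (by linarith [ht.1]), mul_one_add]
  have e₃ : (a - a * t) ^ q = a ^ q * (1 - t) ^ q := by
    rw [← mul_rpow ha.le (by linarith [ht.2]), mul_one_sub]
  rw [e₁, e₂, e₃]
  nlinarith [rpow_pos_of_pos ha q]

lemma two_mul_sq_add_rpow_le_abs_add_rpow_add_abs_sub_rpow {q : ℝ} (hq₁ : 1 ≤ q) (hq₂ : q ≤ 2)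
    (a b : ℝ) :
    2 * (a ^ 2 + (q - 1) * b ^ 2) ^ (q / 2) ≤ |a + b| ^ q + |a - b| ^ q := by
  wlog ha : 0 ≤ a generalizing a
  · have := this (-a) (by linarith)
    rwa [neg_sq, neg_add_eq_sub, abs_sub_comm, ← neg_add', abs_neg,
      add_comm (|a - b| ^ q)] at this
  wlog hb : 0 ≤ b generalizing b
  · have := this (-b) (by linarith)
    rwa [neg_sq, ← sub_eq_add_neg, sub_neg_eq_add, add_comm (|a - b| ^ q)] at this
  rcases le_total b a with hba | hab
  · rw [abs_of_nonneg (by linarith), abs_of_nonneg (by linarith)]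
    exact two_mul_sq_add_rpow_le_add_rpow_add_sub_rpow hq₁ hq₂ hb hba
  · rw [abs_of_nonneg (by linarith), abs_of_nonpos (by linarith), neg_sub, add_comm a b]
    refine le_trans ?_ (two_mul_sq_add_rpow_le_add_rpow_add_sub_rpow hq₁ hq₂ ha hab)
    gcongr 2 * ?_ ^ _
    nlinarith [mul_le_mul_of_nonneg_left (pow_le_pow_left₀ ha hab 2) (by linarith : 0 ≤ 2 - q)]

-- superadditivity of the perspective `(α, a) ↦ α ^ (1 - p) * a ^ p` of the concave `x ↦ x ^ p`
lemma rpow_mul_rpow_add_rpow_mul_rpow_le {p α β a b : ℝ} (hp₀ : 0 ≤ p) (hp₁ : p ≤ 1)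
    (hα : 0 < α) (hβ : 0 < β) (ha : 0 ≤ a) (hb : 0 ≤ b) :
    α ^ (1 - p) * a ^ p + β ^ (1 - p) * b ^ p ≤ (α + β) ^ (1 - p) * (a + b) ^ p := by
  have hαβ : 0 < α + β := by linarith
  have hconc := (concaveOn_rpow hp₀ hp₁).2 (mem_Ici.mpr (div_nonneg ha hα.le))
    (mem_Ici.mpr (div_nonneg hb hβ.le)) (div_nonneg hα.le hαβ.le) (div_nonneg hβ.le hαβ.le)
    (by field_simp)
  have hweight : ∀ {γ c : ℝ}, 0 < γ → 0 ≤ c →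
      γ / (α + β) * (c / γ) ^ p = γ ^ (1 - p) * c ^ p / (α + β) := fun hγ hc => by
    rw [div_rpow hc hγ.le, rpow_sub hγ, rpow_one]
    field_simp
  have hmid : α / (α + β) * (a / α) + β / (α + β) * (b / β) = (a + b) / (α + β) := by
    field_simp
  simp only [smul_eq_mul] at hconc
  rw [hweight hα ha, hweight hβ hb, hmid, div_rpow (by positivity) hαβ.le, ← add_div,
    div_le_div_iff₀ hαβ (rpow_pos_of_pos hαβ p)] at hconc
  calc α ^ (1 - p) * a ^ p + β ^ (1 - p) * b ^ p
      = (α ^ (1 - p) * a ^ p + β ^ (1 - p) * b ^ p) * (α + β) ^ p / (α + β) ^ p := by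
        field_simp
    _ ≤ (a + b) ^ p * (α + β) / (α + β) ^ p := by gcongr
    _ = (α + β) ^ (1 - p) * (a + b) ^ p := by
        rw [rpow_sub hαβ, rpow_one]; ring

lemma Lp_add_Lp_le_Lp_add_of_le_one {ι : Type*} [Fintype ι] {p : ℝ} (hp₀ : 0 < p)
    (hp₁ : p ≤ 1) {f g : ι → ℝ} (hf : ∀ i, 0 ≤ f i) (hg : ∀ i, 0 ≤ g i) :
    (∑ i, f i ^ p) ^ (1 / p) + (∑ i, g i ^ p) ^ (1 / p)
      ≤ (∑ i, (f i + g i) ^ p) ^ (1 / p) := by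
  have mono : ∀ {u : ι → ℝ}, (∀ i, 0 ≤ u i) → (∀ i, u i ≤ f i + g i) →
      (∑ i, u i ^ p) ^ (1 / p) ≤ (∑ i, (f i + g i) ^ p) ^ (1 / p) := fun hu hle => by
    gcongr with i
    · exact Finset.sum_nonneg fun i _ => rpow_nonneg (hu i) p
    · exact hu i
    · exact hle i
  have hSf : 0 ≤ ∑ i, f i ^ p := Finset.sum_nonneg fun i _ => rpow_nonneg (hf i) p
  have hSg : 0 ≤ ∑ i, g i ^ p := Finset.sum_nonneg fun i _ => rpow_nonneg (hg i) p
  have hα_pow : ((∑ i, f i ^ p) ^ (1 / p)) ^ p = ∑ i, f i ^ p := by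
    rw [one_div, rpow_inv_rpow hSf hp₀.ne']
  have hβ_pow : ((∑ i, g i ^ p) ^ (1 / p)) ^ p = ∑ i, g i ^ p := by
    rw [one_div, rpow_inv_rpow hSg hp₀.ne']
  set α := (∑ i, f i ^ p) ^ (1 / p)
  set β := (∑ i, g i ^ p) ^ (1 / p)
  obtain hα | hα := (show 0 ≤ α from rpow_nonneg hSf _).eq_or_lt
  · rw [← hα, zero_add]
    exact mono hg fun i => le_add_of_nonneg_left (hf i)
  obtain hβ | hβ := (show 0 ≤ β from rpow_nonneg hSg _).eq_or_lt
  · rw [← hβ, add_zero]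
    exact mono hf fun i => le_add_of_nonneg_right (hg i)
  have hαβ : 0 < α + β := add_pos hα hβ
  -- with `α`, `β` as the weights, the summed perspective inequality collapses to `α + β`
  have hsum : α + β ≤ (α + β) ^ (1 - p) * ∑ i, (f i + g i) ^ p := by
    calc α + β = α ^ (1 - p) * ∑ i, f i ^ p + β ^ (1 - p) * ∑ i, g i ^ p := by
          rw [← hα_pow, ← hβ_pow, ← rpow_add hα, ← rpow_add hβ, sub_add_cancel, rpow_one,
            rpow_one]
      _ ≤ (α + β) ^ (1 - p) * ∑ i, (f i + g i) ^ p := by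
          simp only [Finset.mul_sum, ← Finset.sum_add_distrib]
          exact Finset.sum_le_sum fun i _ =>
            rpow_mul_rpow_add_rpow_mul_rpow_le hp₀.le hp₁ hα hβ (hf i) (hg i)
  have hpow : (α + β) ^ p ≤ ∑ i, (f i + g i) ^ p := by
    rwa [← mul_le_mul_iff_right₀ (rpow_pos_of_pos hαβ (1 - p)), ← rpow_add hαβ,
      sub_add_cancel, rpow_one]
  calc α + β = ((α + β) ^ p) ^ (1 / p) := by rw [one_div, rpow_rpow_inv hαβ.le hp₀.ne']
    _ ≤ (∑ i, (f i + g i) ^ p) ^ (1 / p) := by gcongr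

lemma sq_rpow_div_two (q a : ℝ) : (a ^ 2) ^ (q / 2) = |a| ^ q := by
  rw [← sq_abs, ← rpow_natCast_mul (abs_nonneg a), Nat.cast_ofNat, mul_div_cancel₀ q two_ne_zero]

section lpNormSq

variable {ι : Type*} [Fintype ι]

noncomputable def lpNormSq (q : ℝ) (x : ι → ℝ) : ℝ := (∑ i, |x i| ^ q) ^ (2 / q)

lemma lpNormSq_smul {q : ℝ} (hq : q ≠ 0) (c : ℝ) (x : ι → ℝ) :
    lpNormSq q (c • x) = c ^ 2 * lpNormSq q x := by
  have hc : (|c| ^ q) ^ (2 / q) = c ^ 2 := by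
    rw [← rpow_mul (abs_nonneg c), mul_div_cancel₀ _ hq, rpow_two, sq_abs]
  simp only [lpNormSq, Pi.smul_apply, smul_eq_mul, abs_mul,
    mul_rpow (abs_nonneg c) (abs_nonneg _), ← Finset.mul_sum]
  rw [mul_rpow (by positivity) (Finset.sum_nonneg fun i _ => by positivity), hc]

lemma lpNormSq_add_lpNormSq_le {q : ℝ} (hq₀ : 0 < q) (hq₂ : q ≤ 2) (x y : ι → ℝ) :
    lpNormSq q x + lpNormSq q y ≤ (∑ i, (x i ^ 2 + y i ^ 2) ^ (q / 2)) ^ (2 / q) := by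
  have h := Lp_add_Lp_le_Lp_add_of_le_one (p := q / 2) (by positivity) (by linarith)
    (f := fun i => x i ^ 2) (g := fun i => y i ^ 2) (fun i => sq_nonneg _)
    (fun i => sq_nonneg _)
  simpa only [lpNormSq, sq_rpow_div_two, one_div_div] using h

lemma lpNormSq_midpoint_add_le {q : ℝ} (hq₁ : 1 ≤ q) (hq₂ : q ≤ 2) (x y : ι → ℝ) :
    lpNormSq q ((2⁻¹ : ℝ) • (x + y)) + (q - 1) * lpNormSq q ((2⁻¹ : ℝ) • (x - y))
      ≤ (lpNormSq q x + lpNormSq q y) / 2 := by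
  set u := (2⁻¹ : ℝ) • (x + y)
  set v := (2⁻¹ : ℝ) • (x - y)
  have hv : (q - 1) * lpNormSq q v = lpNormSq q (√(q - 1) • v) := by
    rw [lpNormSq_smul (c := √(q - 1)) (by linarith), sq_sqrt (by linarith)]
  have hpoint (i : ι) :
      (u i ^ 2 + (√(q - 1) * v i) ^ 2) ^ (q / 2) ≤ (|x i| ^ q + |y i| ^ q) / 2 := by
    have h := two_mul_sq_add_rpow_le_abs_add_rpow_add_abs_sub_rpow hq₁ hq₂ (u i) (v i)
    have hx : u i + v i = x i := congrFun (show u + v = x by simp only [u, v]; module) i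
    have hy : u i - v i = y i := congrFun (show u - v = y by simp only [u, v]; module) i
    rw [hx, hy] at h
    rw [mul_pow, sq_sqrt (by linarith)]
    linarith
  have hconv := (convexOn_rpow (p := 2 / q) (by rw [le_div_iff₀ (by linarith)]; linarith)).2
    (mem_Ici.mpr (Finset.sum_nonneg fun i _ => by positivity : 0 ≤ ∑ i, |x i| ^ q))
    (mem_Ici.mpr (Finset.sum_nonneg fun i _ => by positivity : 0 ≤ ∑ i, |y i| ^ q))
    (by norm_num : (0 : ℝ) ≤ 2⁻¹) (by norm_num : (0 : ℝ) ≤ 2⁻¹) (by norm_num)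
  simp only [smul_eq_mul] at hconv
  calc lpNormSq q u + (q - 1) * lpNormSq q v
      ≤ (∑ i, (u i ^ 2 + (√(q - 1) * v i) ^ 2) ^ (q / 2)) ^ (2 / q) := by
        rw [hv]; exact lpNormSq_add_lpNormSq_le (by linarith) hq₂ u _
    _ ≤ (2⁻¹ * ∑ i, |x i| ^ q + 2⁻¹ * ∑ i, |y i| ^ q) ^ (2 / q) := by
        gcongr ?_ ^ _
        rw [← mul_add, ← Finset.sum_add_distrib, Finset.mul_sum]
        exact Finset.sum_le_sum fun i _ => by linarith [hpoint i]
    _ ≤ (lpNormSq q x + lpNormSq q y) / 2 := by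
        rw [lpNormSq, lpNormSq]; linarith

end lpNormSq

lemma HasDerivAt.le_sub_of_midpoint_le {f : ℝ → ℝ} {f' : ℝ} (hf : HasDerivAt f f' 0)
    (hmid : ∀ t, f (t / 2) ≤ (f 0 + f t) / 2) : f' ≤ f 1 - f 0 := by
  set s : ℕ → ℝ := fun n => ((2⁻¹ : ℝ) ^ n)⁻¹ • (f (0 + 2⁻¹ ^ n) - f 0)
  have hlim : Tendsto s atTop (𝓝 f') := hf.tendsto_slope_zero_right.comp
    (tendsto_pow_atTop_nhdsWithin_zero_of_lt_one (by norm_num) (by norm_num))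
  have hanti : Antitone s := antitone_nat_of_succ_le fun n => by
    have ha : (0 : ℝ) < 2⁻¹ ^ n := by positivity
    have := hmid (2⁻¹ ^ n)
    simp only [s, smul_eq_mul, zero_add]
    rw [pow_succ, mul_inv, inv_inv, ← div_eq_mul_inv]
    calc ((2⁻¹ : ℝ) ^ n)⁻¹ * 2 * (f (2⁻¹ ^ n / 2) - f 0)
        = ((2⁻¹ : ℝ) ^ n)⁻¹ * (2 * (f (2⁻¹ ^ n / 2) - f 0)) := by ring
      _ ≤ ((2⁻¹ : ℝ) ^ n)⁻¹ * (f (2⁻¹ ^ n) - f 0) := by gcongr; linarith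
  simpa [s] using hanti.le_of_tendsto hlim 0

lemma HasDerivAt.add_add_le_of_midpoint_le {f : ℝ → ℝ} {f' κ : ℝ} (hf : HasDerivAt f f' 0)
    (hmid : ∀ t, f (t / 2) + κ * (t / 2) ^ 2 ≤ (f 0 + f t) / 2) : f 0 + f' + κ ≤ f 1 := by
  have hg : HasDerivAt (fun t => f t - κ * t ^ 2) f' 0 :=
    (hf.sub ((hasDerivAt_pow 2 0).const_mul κ)).congr_deriv (by simp)
  have := hg.le_sub_of_midpoint_le fun t => by nlinarith [hmid t]
  norm_num at this
  linarith

lemma HasGradientAt.hasDerivAt_add_smul {E : Type*} [NormedAddCommGroup E]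
    [InnerProductSpace ℝ E] [CompleteSpace E] {F : E → ℝ} {D x : E} (h : HasGradientAt F D x)
    (v : E) :
    HasDerivAt (fun t : ℝ => F (x + t • v)) ⟪D, v⟫ 0 := by
  have hline : HasDerivAt (fun t : ℝ => x + t • v) v 0 := by
    simpa using ((hasDerivAt_id (0 : ℝ)).smul_const v).const_add x
  exact h.hasFDerivAt.comp_hasDerivAt_of_eq 0 hline (by simp)

theorem stmt2 (d : ℕ) (q : ℝ) (hq1 : 1 < q) (hq2 : q ≤ 2)
    (Δ Δs D : EuclideanSpace ℝ (Fin d))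
    (hD : HasGradientAt
      (fun x : EuclideanSpace ℝ (Fin d) => (∑ i, |x i| ^ q) ^ (2 / q)) D Δs) :
    (∑ i, |Δs i| ^ q) ^ (2 / q) + ⟪D, Δ - Δs⟫ +
        (q - 1) * (∑ i, |(Δ - Δs) i| ^ q) ^ (2 / q)
      ≤ (∑ i, |Δ i| ^ q) ^ (2 / q) := by
  set ξ := Δ - Δs
  have hG : HasDerivAt (fun t : ℝ => lpNormSq q (Δs + t • ξ)) ⟪D, ξ⟫ 0 :=
    hD.hasDerivAt_add_smul ξ
  have hmid (t : ℝ) : lpNormSq q (Δs + (t / 2) • ξ) + (q - 1) * lpNormSq q ξ * (t / 2) ^ 2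
      ≤ (lpNormSq q (Δs + (0 : ℝ) • ξ) + lpNormSq q (Δs + t • ξ)) / 2 := by
    have h := lpNormSq_midpoint_add_le hq1.le hq2 Δs (Δs + t • ξ)
    rw [show (2⁻¹ : ℝ) • (Δs + (Δs + t • ξ) : Fin d → ℝ) = Δs + (t / 2) • ξ by module,
      show (2⁻¹ : ℝ) • (Δs - (Δs + t • ξ) : Fin d → ℝ) = (-(t / 2)) • ξ by module,
      lpNormSq_smul (by linarith)] at h
    simp only [WithLp.ofLp_add, WithLp.ofLp_smul, zero_smul, add_zero, neg_sq] at h ⊢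
    linarith
  have := hG.add_add_le_of_midpoint_le hmid
  rwa [zero_smul, add_zero, one_smul, add_sub_cancel] at this
end

section
/- Let a, b > 0, c ≥ 0, and ε > 0, and define g(λ) = aλ + b/λ + cε/λ² for λ > 0. Then for all sufficiently small ε > 0, |inf_{λ>0} g(λ) − 2√(ab) − ε a c / b| ≤ ε² c² a^{3/2} b^{−5/2}, and the infimum is attained at some λ ≥ √(b/a). -/
/-!
Substituting `l = √(b/a) * x` gives `a l + b/l + C/l² = √(ab) * (x + 1/x + u/x²)` with
`u = C / (b √(b/a))`, so everything reduces to `f_u(x) = x + 1/x + u/x²` for `u ≥ 0`.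
Its minimum lies between `2 + u - u²` (a bound valid everywhere) and `f_u(1) = 2 + u`, which
gives the bound `√(ab) u² = (cε)² a^(3/2) b^(-5/2)` for every `ε > 0`. The minimum is attained on
`[1, 2 + u]`: to the left of `1` we have `f_u ≥ f_u(1)`, and `f_u(x) ≥ x` beyond `2 + u`.
-/

open Set

noncomputable def normalizedObjective (u x : ℝ) : ℝ := x + 1 / x + u / x ^ 2

theorem normalizedObjective_one (u : ℝ) : normalizedObjective u 1 = 2 + u := by
  norm_num [normalizedObjective]

theorem le_normalizedObjective {u x : ℝ} (hu : 0 ≤ u) (hx : 0 < x) :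
    x ≤ normalizedObjective u x := by
  unfold normalizedObjective
  have : 0 ≤ 1 / x := by positivity
  have : 0 ≤ u / x ^ 2 := by positivity
  linarith

theorem normalizedObjective_one_le {u x : ℝ} (hu : 0 ≤ u) (hx : 0 < x) (hx1 : x ≤ 1) :
    normalizedObjective u 1 ≤ normalizedObjective u x := by
  rw [normalizedObjective_one, ← sub_nonneg]
  have h : normalizedObjective u x - (2 + u)
      = (x * (x - 1) ^ 2 + u * (1 - x) * (1 + x)) / x ^ 2 := by
    unfold normalizedObjective; field_simp; ring
  rw [h]
  have : 0 ≤ u * (1 - x) * (1 + x) := mul_nonneg (mul_nonneg hu (by linarith)) (by linarith)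
  positivity

theorem two_add_sub_sq_le_normalizedObjective {u x : ℝ} (hu : 0 ≤ u) (hx : 0 < x) :
    2 + u - u ^ 2 ≤ normalizedObjective u x := by
  rw [← sub_nonneg]
  have h : normalizedObjective u x - (2 + u - u ^ 2)
      = (x * (x - 1) ^ 2 + u * (1 - x ^ 2) + u ^ 2 * x ^ 2) / x ^ 2 := by
    unfold normalizedObjective; field_simp; ring
  rw [h]
  refine div_nonneg ?_ (sq_nonneg x)
  rcases le_or_gt x 1 with hx1 | hx1
  · have : 0 ≤ u * (1 - x ^ 2) := mul_nonneg hu (by nlinarith)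
    positivity
  · -- for `x ≥ 1` the numerator is a quadratic in `u` with nonpositive discriminant
    have key : 4 * x ^ 2 * (x * (x - 1) ^ 2 + u * (1 - x ^ 2) + u ^ 2 * x ^ 2)
        = (2 * x ^ 2 * u - x ^ 2 + 1) ^ 2 + (x - 1) ^ 3 * (4 * x ^ 2 + 3 * x + 1) := by ring
    have : 0 ≤ (x - 1) ^ 3 * (4 * x ^ 2 + 3 * x + 1) := by
      have : 0 ≤ x - 1 := by linarith
      positivity
    nlinarith [sq_nonneg (2 * x ^ 2 * u - x ^ 2 + 1)]

theorem exists_one_le_isMinOn_normalizedObjective {u : ℝ} (hu : 0 ≤ u) :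
    ∃ x₀, 1 ≤ x₀ ∧ IsMinOn (normalizedObjective u) (Ioi 0) x₀ := by
  have hcont : ContinuousOn (normalizedObjective u) (Icc 1 (2 + u)) := by
    intro x hx
    have : x ≠ 0 := by linarith [hx.1]
    unfold normalizedObjective
    fun_prop (disch := simp [this])
  obtain ⟨x₀, hx₀, hmin⟩ :=
    isCompact_Icc.exists_isMinOn (nonempty_Icc.2 (by linarith)) hcont
  have hx₀_le_one : normalizedObjective u x₀ ≤ normalizedObjective u 1 :=
    hmin (left_mem_Icc.2 (by linarith))
  refine ⟨x₀, hx₀.1, fun x (hx : 0 < x) => ?_⟩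
  rcases le_or_gt x 1 with hx1 | hx1
  · exact hx₀_le_one.trans (normalizedObjective_one_le hu hx hx1)
  rcases le_or_gt x (2 + u) with hx2 | hx2
  · exact hmin ⟨hx1.le, hx2⟩
  · rw [normalizedObjective_one] at hx₀_le_one
    exact hx₀_le_one.trans (hx2.le.trans (le_normalizedObjective hu hx))

theorem objective_eq_mul_normalizedObjective {a b : ℝ} (ha : 0 < a) (hb : 0 < b) (C : ℝ)
    {l : ℝ} (hl : 0 < l) :
    a * l + b / l + C / l ^ 2
      = √(a * b) * normalizedObjective (C / (b * √(b / a))) (l / √(b / a)) := by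
  obtain ⟨s, hs, rfl⟩ : ∃ s, 0 < s ∧ s ^ 2 = a := ⟨√a, by positivity, Real.sq_sqrt ha.le⟩
  obtain ⟨t, ht, rfl⟩ : ∃ t, 0 < t ∧ t ^ 2 = b := ⟨√b, by positivity, Real.sq_sqrt hb.le⟩
  rw [← mul_pow, ← div_pow, Real.sqrt_sq (by positivity), Real.sqrt_sq (by positivity)]
  unfold normalizedObjective
  field_simp

theorem sqrt_mul_mul_div_sq_eq_rpow {a b : ℝ} (ha : 0 < a) (hb : 0 < b) (C : ℝ) :
    √(a * b) * (C / (b * √(b / a))) ^ 2 = C ^ 2 * a ^ ((3 : ℝ) / 2) * b ^ (-(5 : ℝ) / 2) := by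
  rw [Real.rpow_div_two_eq_sqrt _ ha.le, Real.rpow_div_two_eq_sqrt _ hb.le,
    Real.rpow_neg (by positivity)]
  obtain ⟨s, hs, rfl⟩ : ∃ s, 0 < s ∧ s ^ 2 = a := ⟨√a, by positivity, Real.sq_sqrt ha.le⟩
  obtain ⟨t, ht, rfl⟩ : ∃ t, 0 < t ∧ t ^ 2 = b := ⟨√b, by positivity, Real.sq_sqrt hb.le⟩
  rw [← mul_pow, ← div_pow]
  simp only [Real.sqrt_sq hs.le, Real.sqrt_sq ht.le, Real.sqrt_sq (div_pos ht hs).le,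
    Real.sqrt_sq (mul_pos hs ht).le]
  norm_num
  field_simp

theorem exists_isLeast_objective {a b : ℝ} (ha : 0 < a) (hb : 0 < b) {C : ℝ} (hC : 0 ≤ C) :
    ∃ l, √(b / a) ≤ l ∧
      IsLeast {y | ∃ l > 0, y = a * l + b / l + C / l ^ 2} (a * l + b / l + C / l ^ 2) := by
  have hr : 0 < √(b / a) := by positivity
  obtain ⟨x₀, hx₀, hmin⟩ := exists_one_le_isMinOn_normalizedObjective
    (div_nonneg hC (by positivity : 0 ≤ b * √(b / a)))
  have hl₀ : 0 < √(b / a) * x₀ := by positivity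
  refine ⟨√(b / a) * x₀, le_mul_of_one_le_right hr.le hx₀, ⟨_, hl₀, rfl⟩, ?_⟩
  rintro _ ⟨l, hl, rfl⟩
  rw [objective_eq_mul_normalizedObjective ha hb C hl,
    objective_eq_mul_normalizedObjective ha hb C hl₀, mul_div_cancel_left₀ _ hr.ne']
  exact mul_le_mul_of_nonneg_left (hmin (div_pos hl hr)) (Real.sqrt_nonneg _)

theorem abs_sInf_objective_sub_le {a b : ℝ} (ha : 0 < a) (hb : 0 < b) {C : ℝ} (hC : 0 ≤ C) :
    |sInf {y | ∃ l > 0, y = a * l + b / l + C / l ^ 2} - 2 * √(a * b) - C * a / b|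
      ≤ √(a * b) * (C / (b * √(b / a))) ^ 2 := by
  have hKu : √(a * b) * (C / (b * √(b / a))) = C * a / b := by
    rw [Real.sqrt_div hb.le, Real.sqrt_mul ha.le]
    field_simp
    rw [Real.sq_sqrt ha.le, mul_comm]
  set u := C / (b * √(b / a))
  have hu : 0 ≤ u := div_nonneg hC (by positivity)
  have hr : 0 < √(b / a) := by positivity
  obtain ⟨l₀, hrl₀, hleast⟩ := exists_isLeast_objective ha hb hC
  have hl₀ : 0 < l₀ := hr.trans_le hrl₀
  have upper := hleast.2 ⟨√(b / a), hr, rfl⟩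
  rw [objective_eq_mul_normalizedObjective ha hb C hr, div_self hr.ne',
    normalizedObjective_one] at upper
  have lower : √(a * b) * (2 + u - u ^ 2) ≤ a * l₀ + b / l₀ + C / l₀ ^ 2 := by
    rw [objective_eq_mul_normalizedObjective ha hb C hl₀]
    exact mul_le_mul_of_nonneg_left
      (two_add_sub_sq_le_normalizedObjective hu (div_pos hl₀ hr)) (Real.sqrt_nonneg _)
  have : 0 ≤ √(a * b) * u ^ 2 := by positivity
  rw [hleast.csInf_eq, abs_le]
  constructor <;> linarith

theorem stmt4 (a b c : ℝ) (ha : 0 < a) (hb : 0 < b) (hc : 0 ≤ c) :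
    ∃ ε₀ > 0, ∀ ε : ℝ, 0 < ε → ε < ε₀ →
      |sInf {y : ℝ | ∃ l > 0, y = a * l + b / l + c * ε / l ^ 2}
          - 2 * Real.sqrt (a * b) - ε * a * c / b|
        ≤ ε ^ 2 * c ^ 2 * a ^ ((3 : ℝ) / 2) * b ^ (-(5 : ℝ) / 2) ∧
      ∃ l : ℝ, Real.sqrt (b / a) ≤ l ∧
        IsLeast {y : ℝ | ∃ l' > 0, y = a * l' + b / l' + c * ε / l' ^ 2}
          (a * l + b / l + c * ε / l ^ 2) := by
  refine ⟨1, one_pos, fun ε hε _ => ⟨?_, exists_isLeast_objective ha hb (by positivity)⟩⟩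
  rw [show ε * a * c / b = c * ε * a / b by ring, show ε ^ 2 * c ^ 2 = (c * ε) ^ 2 by ring,
    ← sqrt_mul_mul_div_sq_eq_rpow ha hb]
  exact abs_sInf_objective_sub_le ha hb (by positivity)
end
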